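/- The canonical substitution is a solution: define C₁ = ⋀_{i=1}^m F[x:=u_i] and C_{r+1} = ⋀_{j=1}^{k_r} C_r[α_r:=s_{r,j}] for r = 1,…,n. If the conjunction of all instances F[x:=u_i][α₁:=s_{1,j₁}]⋯[αₙ:=s_{n,jₙ}] (over all 1 ≤ i ≤ m and all choices 1 ≤ j_l ≤ k_l) is unsatisfiable, then the sequent F[x:=u₁],…,F[x:=u_m], C₁ ⊃ ⋀_{j=1}^{k₁} C₁[α₁:=s_{1,j}], …, Cₙ ⊃ ⋀_{j=1}^{kₙ} Cₙ[αₙ:=s_{n,j}] ⊢ is a tautology; moreover Var(C_i) ⊆ {α_i,…,αₙ} for every i, so this sequent is an extended Herbrand-sequent of ∀x F ⊢. -/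

import Mathlib

/-! Replacing `α_r` by terms in `α_{r+1},…,αₙ` only introduces variables above `α_r`, which gives
the variable condition on the `C_r`. For the tautology, a model of the sequent satisfies `C₁` and,
through the implications, every `C_r`. Conversely, if `C_r` holds under a valuation `w`, then so
does the instance `F[x:=u_i][α₁:=s_{1,j₁}]⋯` after its first `r` substitutions: `C_{r+1}` at `w`
gives `C_r` at the valuation `α_r ↦ s_{r,j_r}(w)`, and the instance after `r` substitutions at
that valuation is the instance after `r + 1` substitutions at `w`. At `r = n` every Herbrand
instance holds, against their unsatisfiability. -/

open FirstOrder Language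

/-- Conjunction of a list of formulas. -/
def conjList {L : FirstOrder.Language} {β : Type} : List (L.Formula β) → L.Formula β :=
  fun l => l.foldr (fun φ ψ => φ ⊓ ψ) ⊤

/-- The instance `F[x:=u_i][α₀:=s₀,ⱼ₀]⋯[α_{n-1}:=s_{n-1},j_{n-1}]`. -/
def herbrandInstance (L : FirstOrder.Language) (n m : ℕ)
    (F : L.Formula (Fin 1)) (u : Fin m → L.Term (Fin n))
    (k : Fin n → ℕ) (s : (i : Fin n) → Fin (k i) → L.Term (Fin n))
    (i : Fin m) (j : (r : Fin n) → Fin (k r)) : L.Formula (Fin n) :=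
  (List.finRange n).foldl
    (fun φ r => φ.subst (Function.update Term.var r (s r (j r))))
    (F.subst (fun _ => u i))

/-- The formulas of the canonical substitution: `canonicalC … 0 = C₁ = ⋀_i F[x:=u_i]`
and `canonicalC … (r+1) = C_{r+2} = ⋀_j C_{r+1}[α_{r+1}:=s_{r+1,j}]` (0-indexed: the
paper's `C_{r+1}` is `canonicalC … r`). -/
def canonicalC (L : FirstOrder.Language) (n m : ℕ)
    (F : L.Formula (Fin 1)) (u : Fin m → L.Term (Fin n))
    (k : Fin n → ℕ) (s : (i : Fin n) → Fin (k i) → L.Term (Fin n)) :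
    ℕ → L.Formula (Fin n)
  | 0 => conjList ((List.finRange m).map (fun i => F.subst (fun _ => u i)))
  | r + 1 =>
    if h : r < n then
      conjList ((List.finRange (k ⟨r, h⟩)).map
        (fun j => (canonicalC L n m F u k s r).subst
          (Function.update Term.var ⟨r, h⟩ (s ⟨r, h⟩ j))))
    else canonicalC L n m F u k s r

namespace FirstOrder.Language

variable {L : Language} {α β γ : Type*} [DecidableEq α] [DecidableEq β]

theorem Term.varFinsetLeft_relabel_inl (t : L.Term α) :
    (t.relabel (Sum.inl : α → α ⊕ γ)).varFinsetLeft = t.varFinset := by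
  induction t with
  | var a => simp
  | func f ts ih => simp [ih]

theorem Term.varFinsetLeft_subst (t : L.Term (α ⊕ γ)) (tf : α → L.Term β) :
    (t.subst (Sum.elim (Term.relabel Sum.inl ∘ tf) (Term.var ∘ Sum.inr))).varFinsetLeft =
      t.varFinsetLeft.biUnion fun a => (tf a).varFinset := by
  induction t with
  | var a => cases a <;> simp [Term.subst, Term.varFinsetLeft_relabel_inl]
  | func f ts ih => simp [Term.subst, ih, Finset.biUnion_biUnion]

theorem BoundedFormula.freeVarFinset_subst {n : ℕ} (φ : L.BoundedFormula α n)
    (tf : α → L.Term β) :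
    (φ.subst tf).freeVarFinset = φ.freeVarFinset.biUnion fun a => (tf a).varFinset := by
  induction φ with
  | falsum => rfl
  | equal t₁ t₂ =>
    simp [BoundedFormula.subst, mapTermRel, freeVarFinset, Term.varFinsetLeft_subst,
      Finset.union_biUnion]
  | rel R ts =>
    simp [BoundedFormula.subst, mapTermRel, freeVarFinset, Term.varFinsetLeft_subst,
      Finset.biUnion_biUnion]
  | imp φ₁ φ₂ ih₁ ih₂ =>
    simp_all [BoundedFormula.subst, mapTermRel, freeVarFinset, Finset.union_biUnion]
  | all φ ih => exact ih

theorem BoundedFormula.freeVarFinset_inf {n : ℕ} (φ ψ : L.BoundedFormula α n) :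
    (φ ⊓ ψ).freeVarFinset = φ.freeVarFinset ∪ ψ.freeVarFinset := by
  simp [Min.min, BoundedFormula.not, freeVarFinset]

end FirstOrder.Language

section conjList

variable {L : Language} {β : Type}

theorem realize_conjList {M : Type*} [L.Structure M] (l : List (L.Formula β)) (v : β → M) :
    (conjList l).Realize v ↔ ∀ φ ∈ l, φ.Realize v := by
  induction l with
  | nil => simp [conjList, Formula.realize_top]
  | cons φ l ih =>
    simp only [conjList] at ih ⊢
    simp [Formula.realize_inf, ih]

theorem mem_freeVarFinset_conjList [DecidableEq β] (l : List (L.Formula β)) (b : β) :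
    b ∈ (conjList l).freeVarFinset ↔ ∃ φ ∈ l, b ∈ φ.freeVarFinset := by
  induction l with
  | nil => simp [conjList, Top.top, BoundedFormula.not, BoundedFormula.freeVarFinset]
  | cons φ l ih =>
    simp only [conjList] at ih ⊢
    simp [BoundedFormula.freeVarFinset_inf, ih]

end conjList

def partialHerbrandInstance (L : FirstOrder.Language) (n m : ℕ)
    (F : L.Formula (Fin 1)) (u : Fin m → L.Term (Fin n))
    (k : Fin n → ℕ) (s : (i : Fin n) → Fin (k i) → L.Term (Fin n))
    (i : Fin m) (j : (r : Fin n) → Fin (k r)) (r : ℕ) : L.Formula (Fin n) :=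
  ((List.finRange n).take r).foldl
    (fun φ p => φ.subst (Function.update Term.var p (s p (j p))))
    (F.subst (fun _ => u i))

section canonicalSubstitution

variable {L : Language} {n m : ℕ} {F : L.Formula (Fin 1)} {u : Fin m → L.Term (Fin n)}
  {k : Fin n → ℕ} {s : (i : Fin n) → Fin (k i) → L.Term (Fin n)}

theorem canonicalC_succ {r : ℕ} (hr : r < n) :
    canonicalC L n m F u k s (r + 1) =
      conjList ((List.finRange (k ⟨r, hr⟩)).map fun j =>
        (canonicalC L n m F u k s r).subst (Function.update Term.var ⟨r, hr⟩ (s ⟨r, hr⟩ j))) := by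
  rw [canonicalC, dif_pos hr]

theorem le_of_mem_freeVarFinset_canonicalC (hs : ∀ i j, ∀ γ ∈ (s i j).varFinset, i < γ) :
    ∀ {r : ℕ}, r ≤ n → ∀ γ ∈ (canonicalC L n m F u k s r).freeVarFinset, r ≤ (γ : ℕ)
  | 0, _, _, _ => Nat.zero_le _
  | r + 1, hr, γ, hγ => by
    simp only [canonicalC_succ hr, mem_freeVarFinset_conjList, List.mem_map, List.mem_finRange,
      true_and, exists_exists_eq_and, BoundedFormula.freeVarFinset_subst,
      Finset.mem_biUnion] at hγ
    obtain ⟨j, δ, hδ, hγδ⟩ := hγ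
    by_cases hδr : δ = ⟨r, hr⟩
    · subst hδr
      rw [Function.update_self] at hγδ
      exact hs _ j γ hγδ
    · rw [Function.update_of_ne hδr, Term.varFinset, Finset.mem_singleton] at hγδ
      subst hγδ
      have hrγ := le_of_mem_freeVarFinset_canonicalC hs (Nat.le_of_succ_le hr) γ hδ
      have hγr : (γ : ℕ) ≠ r := fun h => hδr (Fin.ext h)
      omega

theorem partialHerbrandInstance_succ (i : Fin m) (j : (r : Fin n) → Fin (k r)) {r : ℕ}
    (hr : r < n) :
    partialHerbrandInstance L n m F u k s i j (r + 1) =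
      (partialHerbrandInstance L n m F u k s i j r).subst
        (Function.update Term.var ⟨r, hr⟩ (s ⟨r, hr⟩ (j ⟨r, hr⟩))) := by
  simp [partialHerbrandInstance, List.take_add_one, hr]

theorem partialHerbrandInstance_self (i : Fin m) (j : (r : Fin n) → Fin (k r)) :
    partialHerbrandInstance L n m F u k s i j n = herbrandInstance L n m F u k s i j := by
  simp [partialHerbrandInstance, herbrandInstance, List.take_of_length_le]

variable {M : Type*} [L.Structure M]

theorem realize_canonicalC_succ {r : ℕ} (hr : r < n) (v : Fin n → M) :
    (canonicalC L n m F u k s (r + 1)).Realize v ↔ ∀ j,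
      Formula.Realize ((canonicalC L n m F u k s r).subst
        (Function.update Term.var ⟨r, hr⟩ (s ⟨r, hr⟩ j))) v := by
  simp [canonicalC_succ hr, realize_conjList]

theorem realize_canonicalC {v : Fin n → M}
    (hinst : ∀ i, Formula.Realize (F.subst fun _ => u i) v)
    (hcut : ∀ r : Fin n, (canonicalC L n m F u k s r).Realize v → ∀ j,
      Formula.Realize ((canonicalC L n m F u k s r).subst (Function.update Term.var r (s r j))) v) :
    ∀ {r : ℕ}, r ≤ n → (canonicalC L n m F u k s r).Realize v
  | 0, _ => by simpa [canonicalC, realize_conjList] using hinst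
  | r + 1, hr => (realize_canonicalC_succ hr v).2 <|
      hcut ⟨r, hr⟩ (realize_canonicalC hinst hcut (Nat.le_of_succ_le hr))

theorem realize_partialHerbrandInstance_of_realize_canonicalC (i : Fin m)
    (j : (r : Fin n) → Fin (k r)) :
    ∀ {r : ℕ}, r ≤ n → ∀ v : Fin n → M, (canonicalC L n m F u k s r).Realize v →
      (partialHerbrandInstance L n m F u k s i j r).Realize v
  | 0, _, v, hv => by
    simp only [canonicalC, realize_conjList, List.mem_map, List.mem_finRange, true_and,
      forall_exists_index, forall_apply_eq_imp_iff] at hv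
    exact hv i
  | r + 1, hr, v, hv => by
    rw [partialHerbrandInstance_succ i j hr, Formula.Realize, BoundedFormula.realize_subst]
    exact realize_partialHerbrandInstance_of_realize_canonicalC i j (Nat.le_of_succ_le hr) _
      (BoundedFormula.realize_subst.1 ((realize_canonicalC_succ hr v).1 hv (j ⟨r, hr⟩)))

end canonicalSubstitution

theorem canonical_substitution_is_solution_general
    (L : FirstOrder.Language) (n m : ℕ)
    (F : L.Formula (Fin 1))
    (u : Fin m → L.Term (Fin n))
    (k : Fin n → ℕ)
    (s : (i : Fin n) → Fin (k i) → L.Term (Fin n))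
    (hs : ∀ i j, ∀ γ ∈ (s i j).varFinset, i < γ)
    (hT : ∀ (M : Type) [L.Structure M] [Nonempty M] (v : Fin n → M),
        ¬ ∀ (i : Fin m) (j : (r : Fin n) → Fin (k r)),
            Formula.Realize (M := M) (herbrandInstance L n m F u k s i j) v) :
    (∀ r : Fin n, ∀ γ ∈ (canonicalC L n m F u k s r).freeVarFinset, r ≤ γ) ∧
    (∀ (M : Type) [L.Structure M] [Nonempty M] (v : Fin n → M),
      ¬ ((∀ i : Fin m, Formula.Realize (M := M) (F.subst (fun _ => u i)) v) ∧
         (∀ r : Fin n,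
            Formula.Realize (M := M) (canonicalC L n m F u k s r) v →
            ∀ j : Fin (k r),
              Formula.Realize (M := M)
                ((canonicalC L n m F u k s r).subst
                  (Function.update Term.var r (s r j))) v))) := by
  refine ⟨fun r => le_of_mem_freeVarFinset_canonicalC hs r.isLt.le, ?_⟩
  rintro M _ _ v ⟨hinst, hcut⟩
  have hCn := realize_canonicalC hinst hcut le_rfl
  refine hT M v fun i j => ?_
  rw [← partialHerbrandInstance_self]
  exact realize_partialHerbrandInstance_of_realize_canonicalC i j le_rfl v hCn

/-- **the canonical substitution is a solution.**
With `C₁ = ⋀_i F[x:=u_i]` and `C_{r+1} = ⋀_j C_r[α_r:=s_{r,j}]` (0-indexed below): if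
the conjunction of all instances `F[x:=u_i][α₁:=s_{1,j₁}]⋯[αₙ:=s_{n,jₙ}]` is
unsatisfiable, then the sequent
`F[x:=u₁],…,F[x:=u_m], C₁ ⊃ ⋀_j C₁[α₁:=s_{1,j}], …, Cₙ ⊃ ⋀_j Cₙ[αₙ:=s_{n,j}] ⊢`
is a tautology; moreover `Var(C_i) ⊆ {α_i,…,αₙ}` for every `i`, so this sequent is an
extended Herbrand-sequent of `∀x F ⊢`. -/
theorem canonical_substitution_is_solution
    (L : FirstOrder.Language) (n m : ℕ)
    (F : L.Formula (Fin 1)) (hF : F.IsQF)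
    (u : Fin m → L.Term (Fin n))
    (k : Fin n → ℕ)
    (s : (i : Fin n) → Fin (k i) → L.Term (Fin n))
    (hs : ∀ i j, ∀ γ ∈ (s i j).varFinset, i < γ)
    (hT : ∀ (M : Type) [L.Structure M] [Nonempty M] (v : Fin n → M),
        ¬ ∀ (i : Fin m) (j : (r : Fin n) → Fin (k r)),
            Formula.Realize (M := M) (herbrandInstance L n m F u k s i j) v) :
    (∀ r : Fin n, ∀ γ ∈ (canonicalC L n m F u k s r).freeVarFinset, r ≤ γ) ∧
    (∀ (M : Type) [L.Structure M] [Nonempty M] (v : Fin n → M),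
      ¬ ((∀ i : Fin m, Formula.Realize (M := M) (F.subst (fun _ => u i)) v) ∧
         (∀ r : Fin n,
            Formula.Realize (M := M) (canonicalC L n m F u k s r) v →
            ∀ j : Fin (k r),
              Formula.Realize (M := M)
                ((canonicalC L n m F u k s r).subst
                  (Function.update Term.var r (s r j))) v))) :=
  canonical_substitution_is_solution_general L n m F u k s hs hT
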